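/- arXiv:1503.05025 — 2 statements merged into one kernel-verified Lean document; each statement's English description precedes it below -/
import Mathlib

section
/- If f ∈ 𝒞 is not isolated in 𝒞, then for every n and every k there exists a finite sequence u extending f↾n (i.e. [u] ⊆ [f↾n]) such that [u] ∩ 𝒞 ≠ ∅ and K_𝒞(u) > k. -/
/-- `f` extends the finite sequence `v`. -/
def Extends (f : ℕ → ℕ) (v : List ℕ) : Prop := ∀ j, ∀ _h : j < v.length, f j = v.getD j 0

/-- prefix `f↾n = (f 0, …, f (n-1))`. -/
def pref (f : ℕ → ℕ) (n : ℕ) : List ℕ := (List.range n).map f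

/-- `K_𝒞` of a finite sequence, where `𝒞 = {F i : i ∈ ℕ}`. -/
noncomputable def KCv (F : ℕ → ℕ → ℕ) (v : List ℕ) : ℕ∞ :=
  sInf ((fun i : ℕ => (i : ℕ∞)) '' {i | Extends (F i) v})

/-- `K_𝒞` of a function. -/
noncomputable def KCf (F : ℕ → ℕ → ℕ) (f : ℕ → ℕ) : ℕ∞ :=
  sInf ((fun i : ℕ => (i : ℕ∞)) '' {i | F i = f})

lemma pref_length' (f : ℕ → ℕ) (n : ℕ) : (pref f n).length = n := by simp [pref]

lemma pref_eq_iff {g f : ℕ → ℕ} {n : ℕ} : pref g n = pref f n ↔ ∀ j < n, g j = f j := by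
  constructor
  · intro h j hj
    have := congrArg (fun l : List ℕ => l.getD j 0) h
    simpa [pref, List.getD_eq_getElem?_getD, hj] using this
  · intro h
    apply List.ext_getElem <;> simp [pref]
    intro j hj; exact h j hj

lemma extends_iff {g f : ℕ → ℕ} {n : ℕ} : Extends g (pref f n) ↔ ∀ j < n, g j = f j := by
  constructor
  · intro h j hj
    have := h j (by simpa [pref] using hj)
    simpa [pref, List.getD_eq_getElem?_getD, hj] using this
  · intro h j hj
    rw [pref_length'] at hj
    simp [pref, List.getD_eq_getElem?_getD, hj, h j hj]

lemma extends_pref (f : ℕ → ℕ) (n : ℕ) : Extends f (pref f n) :=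
  extends_iff.mpr fun _ _ => rfl

lemma pref_take (f : ℕ → ℕ) {n p : ℕ} (h : n ≤ p) : (pref f p).take n = pref f n := by
  unfold pref; rw [← List.map_take, List.take_range, Nat.min_eq_left h]

lemma pref_prefix (f : ℕ → ℕ) {n p : ℕ} (h : n ≤ p) : pref f n <+: pref f p := by
  rw [← pref_take f h]; exact List.take_prefix _ _

lemma extends_eq_pref {g : ℕ → ℕ} {v : List ℕ} (h : Extends g v) : pref g v.length = v := by
  apply List.ext_getElem (by simp [pref])
  intro j hj hj'
  have := h j hj'
  simp [pref, List.getD_eq_getElem?_getD, hj'] at this ⊢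
  exact this

lemma many_in_cylinder (F : ℕ → ℕ → ℕ) (f : ℕ → ℕ)
    (hni : ∀ n, ∃ g, (∃ j, F j = g) ∧ g ≠ f ∧ pref g n = pref f n) (n : ℕ) :
    ∀ m : ℕ, ∃ h : Fin m → (ℕ → ℕ), Function.Injective h ∧
      ∀ s, (∃ j, F j = h s) ∧ pref (h s) n = pref f n := by
  intro m
  induction m with
  | zero => exact ⟨fun s => f, fun s => s.elim0, fun s => s.elim0⟩
  | succ m ih =>
    classical
    obtain ⟨h, hinj, hprop⟩ := ih
    set d : Fin m → ℕ := fun s =>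
      if hs : h s = f then 0 else Nat.find (Function.ne_iff.mp hs) with hd
    set N : ℕ := max n ((Finset.univ.sup d) + 1) with hN
    obtain ⟨g, hgC, hgf, hgpref⟩ := hni N
    have hgj : ∀ j < N, g j = f j := pref_eq_iff.mp hgpref
    have hgne : ∀ s, g ≠ h s := by
      intro s
      by_cases hs : h s = f
      · rw [hs]; exact hgf
      · have hds : d s = Nat.find (Function.ne_iff.mp hs) := by simp [hd, hs]
        have h1 : h s (d s) ≠ f (d s) := by rw [hds]; exact Nat.find_spec (Function.ne_iff.mp hs)
        have h2 : d s < N := by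
          calc d s ≤ Finset.univ.sup d := Finset.le_sup (Finset.mem_univ s)
          _ < N := lt_of_lt_of_le (Nat.lt_succ_self _) (le_max_right _ _)
        intro hcon
        exact h1 (by rw [← hcon]; exact hgj _ h2)
    refine ⟨Fin.cons g h, ?_, ?_⟩
    · rw [Fin.cons_injective_iff]
      exact ⟨by rintro ⟨s, rfl⟩; exact hgne s rfl, hinj⟩
    · intro s
      refine Fin.cases ?_ ?_ s
      · refine ⟨hgC, ?_⟩
        simp only [Fin.cons_zero]
        rw [← pref_take g (le_max_left n _), hgpref, pref_take f (le_max_left n _)]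
      · intro t; simpa using hprop t

/-- non-isolation gives, for all `n, k`, a finite extension `u` of `f↾n`
meeting `𝒞` with `K_𝒞(u) > k`. -/
theorem stmt10 (F : ℕ → ℕ → ℕ) (f : ℕ → ℕ) (hf : ∃ i, F i = f)
    (hni : ∀ n, ∃ g, (∃ j, F j = g) ∧ g ≠ f ∧ pref g n = pref f n)
    (n k : ℕ) :
    ∃ u : List ℕ, pref f n <+: u ∧ (∃ g, (∃ j, F j = g) ∧ Extends g u) ∧
      (k : ℕ∞) < KCv F u := by
  classical
  obtain ⟨h, hinj, hprop⟩ := many_in_cylinder F f hni n (k + 2)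
  -- choose p ≥ n so that the length-p prefixes of the h s are pairwise distinct
  set E : Fin (k + 2) → Fin (k + 2) → ℕ := fun s t =>
    if hst : h s = h t then 0 else Nat.find (Function.ne_iff.mp hst) with hE
  set p : ℕ := max n ((Finset.univ.sup fun s => Finset.univ.sup (E s)) + 1) with hp
  have hnp : n ≤ p := le_max_left _ _
  have hEp : ∀ s t, E s t < p := by
    intro s t
    have h1 : E s t ≤ Finset.univ.sup fun s => Finset.univ.sup (E s) :=
      le_trans (Finset.le_sup (Finset.mem_univ t))
        (Finset.le_sup (f := fun s => Finset.univ.sup (E s)) (Finset.mem_univ s))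
    exact lt_of_lt_of_le (Nat.lt_succ_of_le h1) (le_max_right _ _)
  have hprefinj : ∀ s t, pref (h s) p = pref (h t) p → s = t := by
    intro s t hst
    by_contra hne
    have hhs : h s ≠ h t := fun hc => hne (hinj hc)
    have hEst : E s t = Nat.find (Function.ne_iff.mp hhs) := by simp [hE, hhs]
    have h1 : h s (E s t) ≠ h t (E s t) := by
      rw [hEst]; exact Nat.find_spec (Function.ne_iff.mp hhs)
    exact h1 (pref_eq_iff.mp hst _ (hEp s t))
  -- pigeonhole: some prefix is not extended by any F i with i ≤ k
  have key : ∃ s : Fin (k + 2), ∀ i ≤ k, ¬ Extends (F i) (pref (h s) p) := by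
    by_contra hcon
    push_neg at hcon
    choose φ hφk hφ using hcon
    have hφinj : Function.Injective fun s => (⟨φ s, Nat.lt_succ_of_le (hφk s)⟩ : Fin (k + 1)) := by
      intro s t hst
      simp only [Fin.mk.injEq] at hst
      apply hprefinj
      have h1 := extends_eq_pref (hφ s)
      have h2 := extends_eq_pref (hφ t)
      rw [pref_length'] at h1 h2
      rw [← h1, ← h2, hst]
    have := Fintype.card_le_of_injective _ hφinj
    simp at this
  obtain ⟨s, hs⟩ := key
  refine ⟨pref (h s) p, ?_, ⟨h s, (hprop s).1, extends_pref _ _⟩, ?_⟩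
  · calc pref f n = pref (h s) n := ((hprop s).2).symm
    _ <+: pref (h s) p := pref_prefix _ hnp
  · have hlb : ((k : ℕ∞) + 1) ≤ KCv F (pref (h s) p) := by
      apply le_sInf
      rintro x ⟨i, hi, rfl⟩
      have hik : k < i := by
        by_contra hik
        exact hs i (le_of_not_gt hik) hi
      show (k : ℕ∞) + 1 ≤ (i : ℕ∞)
      exact_mod_cast Nat.succ_le_of_lt hik
    have hlt : (k : ℕ∞) < (k : ℕ∞) + 1 := by
      exact_mod_cast Nat.lt_succ_self k
    exact lt_of_lt_of_le hlt hlb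
end

section
/- If f ∈ 𝒞 is not isolated in 𝒞, then there exists a nondecreasing unbounded function h : ℕ → ℕ such that f ∈ A_{𝒞,h} but f is not in the interior of A_{𝒞,h} relative to 𝒞: for every n, [f↾n] ∩ 𝒞 ⊄ A_{𝒞,h}. -/
/-!
Let `f = F i₀`. Given `B` and `n`, take `N ≥ n` past a point where each `F j ≠ f` with `j ≤ B`
differs from `f`, and then `g ∈ 𝒞` with `g ≠ f` and `g↾N = f↾N`. Once `m` is past a point where `g`
leaves `f`, no `F j` with `j ≤ B` extends `g↾m`: those equal to `f` disagree with `g` there, the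
others already disagree with `f = g` below `N`. With `B = i₀ + n` this gives, for each `n`, a `g`
near `f` and a threshold `M n` after which `K_𝒞(g↾m) > i₀ + n`. An order `h = i₀ + h₀` growing so
slowly that `h₀ m ≤ n` for some `m ≥ M n` keeps `f` in `A_{𝒞,h}` (as `K_𝒞(f↾n) ≤ i₀`) but none of
these `g`.
-/

open Filter

lemma pref_eq_pref_iff {f g : ℕ → ℕ} {n : ℕ} : pref g n = pref f n ↔ ∀ k < n, g k = f k := by
  simp [pref, List.map_inj_left]

lemma extends_pref_iff {f g : ℕ → ℕ} {n : ℕ} : Extends g (pref f n) ↔ ∀ k < n, g k = f k := by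
  simp +contextual [Extends, pref]

lemma KCv_le_iff {F : ℕ → ℕ → ℕ} {v : List ℕ} {B : ℕ} :
    KCv F v ≤ B ↔ ∃ j ≤ B, Extends (F j) v := by
  refine ⟨fun hle => ?_, fun ⟨j, hjB, hj⟩ =>
    (sInf_le (Set.mem_image_of_mem _ hj)).trans (by exact_mod_cast hjB)⟩
  by_contra! hgt
  have : ((B + 1 : ℕ) : ℕ∞) ≤ KCv F v := le_sInf <| by
    rintro _ ⟨j, hj, rfl⟩
    show ((B + 1 : ℕ) : ℕ∞) ≤ j
    exact_mod_cast Nat.succ_le_of_lt (lt_of_not_ge fun hjB => hgt j hjB hj)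
  exact absurd (this.trans hle) (by norm_cast; omega)

lemma eventually_exists_lt_ne {f g : ℕ → ℕ} (h : g ≠ f) : ∀ᶠ N in atTop, ∃ k < N, g k ≠ f k := by
  obtain ⟨d, hd⟩ := Function.ne_iff.mp h
  exact eventually_atTop.2 ⟨d + 1, fun N hN => ⟨d, by omega, hd⟩⟩

lemma exists_monotone_unbounded_le_beyond (M : ℕ → ℕ) :
    ∃ h : ℕ → ℕ, Monotone h ∧ (∀ k, ∃ n, k ≤ h n) ∧ ∀ n, ∃ m ≥ M n, h m ≤ n := by
  set p : ℕ → ℕ := fun n => n + (Finset.range (n + 1)).sup M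
  have hp_mono : Monotone p := fun a b hab =>
    Nat.add_le_add hab (Finset.sup_mono (Finset.range_subset_range.2 (by omega)))
  have hp_ge (q : ℕ) : q ≤ p q := Nat.le_add_right _ _
  refine ⟨fun q => sInf {k | q ≤ p k}, fun a b hab => ?_, fun K => ⟨p K + 1, ?_⟩,
    fun n => ⟨p n, ?_, ?_⟩⟩
  · exact Nat.sInf_le (hab.trans (Nat.sInf_mem (s := {k | b ≤ p k}) ⟨b, hp_ge b⟩))
  · exact le_csInf ⟨_, hp_ge _⟩ fun k hk => (hp_mono.reflect_lt hk).le
  · exact (Finset.le_sup (Finset.self_mem_range_succ n)).trans (Nat.le_add_left _ _)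
  · exact Nat.sInf_le (show p n ≤ p n from le_rfl)

lemma exists_pref_eq_eventually_lt_KCv {F : ℕ → ℕ → ℕ} {f : ℕ → ℕ}
    (hni : ∀ n, ∃ g ∈ Set.range F, g ≠ f ∧ pref g n = pref f n) (B n : ℕ) :
    ∃ g ∈ Set.range F, pref g n = pref f n ∧ ∀ᶠ m in atTop, (B : ℕ∞) < KCv F (pref g m) := by
  have hsep : ∀ᶠ N in atTop, n ≤ N ∧ ∀ j ∈ Finset.range (B + 1), F j ≠ f → ∃ k < N, F j k ≠ f k :=
    (eventually_ge_atTop n).and <|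
      (eventually_all_finset _).2 fun j _ => eventually_imp_distrib_left.2 eventually_exists_lt_ne
  obtain ⟨N, hnN, hN⟩ := hsep.exists
  obtain ⟨g, hg, hgf, hgN⟩ := hni N
  rw [pref_eq_pref_iff] at hgN
  obtain ⟨d, hd⟩ := Function.ne_iff.mp hgf
  have hNd : N ≤ d := le_of_not_gt fun hdN => hd (hgN d hdN)
  refine ⟨g, hg, pref_eq_pref_iff.2 fun k hk => hgN k (by omega), ?_⟩
  filter_upwards [eventually_gt_atTop d] with m hdm
  rw [lt_iff_not_ge, KCv_le_iff]
  rintro ⟨j, hjB, hext⟩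
  rw [extends_pref_iff] at hext
  by_cases hjf : F j = f
  · exact hd (hjf ▸ hext d hdm).symm
  · obtain ⟨k, hkN, hk⟩ := hN j (Finset.mem_range_succ_iff.2 hjB) hjf
    exact hk ((hext k (by omega)).trans (hgN k hkN))

/-- for non-isolated `f ∈ 𝒞` there is an order `h` with
`f ∈ A_{𝒞,h}` but `f` not in the interior of `A_{𝒞,h}` relative to `𝒞`. -/
theorem stmt11 (F : ℕ → ℕ → ℕ) (f : ℕ → ℕ) (hf : ∃ i, F i = f)
    (hni : ∀ n, ∃ g, (∃ j, F j = g) ∧ g ≠ f ∧ pref g n = pref f n) :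
    ∃ h : ℕ → ℕ, Monotone h ∧ (∀ k, ∃ n, k ≤ h n) ∧
      (∀ n, KCv F (pref f n) ≤ (h n : ℕ∞)) ∧
      (∀ n, ∃ g, (∃ j, F j = g) ∧ pref g n = pref f n ∧
        ¬ (∀ m, KCv F (pref g m) ≤ (h m : ℕ∞))) := by
  obtain ⟨i₀, hi₀⟩ := hf
  choose g hg hgf hgK using fun n => exists_pref_eq_eventually_lt_KCv hni (i₀ + n) n
  choose M hM using fun n => eventually_atTop.1 (hgK n)
  obtain ⟨h₀, hmono, hunb, hle⟩ := exists_monotone_unbounded_le_beyond M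
  refine ⟨fun m => i₀ + h₀ m, fun a b hab => Nat.add_le_add_left (hmono hab) i₀,
    fun k => (hunb k).imp fun n hn => Nat.le_add_left_of_le hn, fun n => ?_,
    fun n => ⟨g n, hg n, hgf n, ?_⟩⟩
  · exact KCv_le_iff.2 ⟨i₀, Nat.le_add_right _ _, extends_pref_iff.2 fun k _ => congrFun hi₀ k⟩
  · obtain ⟨m, hMm, hm⟩ := hle n
    refine fun hA => absurd ((hA m).trans ?_) (hM n m hMm).not_ge
    exact_mod_cast Nat.add_le_add_left hm i₀
end
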